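/- There exists a periodic Golay pair of length 202. -/

import Mathlib

open Finset

/-- Zero-extension of a sequence indexed by `ZMod v` to all of `ℤ`,
with `a_i = 0` for `i` outside `[0, v-1]`. -/
def zext (v : ℕ) (A : ZMod v → ℤ) (n : ℤ) : ℤ :=
  if 0 ≤ n ∧ n < (v : ℤ) then A (n : ZMod v) else 0

/-- Nonperiodic autocorrelation function `NAF_A(s) = Σ_{i∈ℤ} a_i a_{i+s}`. -/
def naf (v : ℕ) (A : ZMod v → ℤ) (s : ℤ) : ℤ :=
  ∑ i ∈ Finset.range v, zext v A i * zext v A (i + s)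

/-- Periodic autocorrelation function `PAF_A(s) = Σ_{i∈Z_v} a_i a_{i+s}`. -/
def paf (v : ℕ) (A : ZMod v → ℤ) (s : ZMod v) : ℤ :=
  ∑ i ∈ Finset.range v, A i * A ((i : ZMod v) + s)

/-- Number of ordered pairs `(a,b)` with `a - b = c` and both `a,b` in `X`,
or both in `Y` (counted with multiplicity over the two blocks). -/
def sdsCount (v : ℕ) (X Y : Finset (ZMod v)) (c : ZMod v) : ℕ :=
  ((X ×ˢ X).filter fun p => p.1 - p.2 = c).card +
  ((Y ×ˢ Y).filter fun p => p.1 - p.2 = c).card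

/-!
The sets `X = J·H` and `Y = K·H` form a supplementary difference set with parameters
`(v; k₁, k₂; λ) = (202; 100, 91; 90)`. For the `±1` sequence `a = 1 - 2·𝟙_X` one has
`PAF_a(s) = v - 4|X| + 4 λ_X(s)`, where `λ_X(s)` counts the representations of `s` as a difference
of two elements of `X`. Summing over `X` and `Y`, the periodic autocorrelations cancel at every
`s ≠ 0` precisely because `v = 2 (k₁ + k₂ - λ)`.

Since `X` and `Y` are unions of `H`-orbits, the difference count is constant on the orbits of
`±H` acting on `ℤ/202`, so it has to be computed only at one representative of each of the
21 orbits of nonzero residues; this is done by kernel evaluation.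
-/

open scoped Pointwise

section SignSequence

variable {v : ℕ}

def signSeq (X : Finset (ZMod v)) (i : ZMod v) : ℤ := if i ∈ X then -1 else 1

lemma signSeq_eq_one_or_neg_one (X : Finset (ZMod v)) (i : ZMod v) :
    signSeq X i = 1 ∨ signSeq X i = -1 := by
  unfold signSeq; split_ifs <;> simp

lemma sum_range_natCast_eq_sum [NeZero v] {M : Type*} [AddCommMonoid M] (f : ZMod v → M) :
    ∑ i ∈ range v, f i = ∑ x, f x :=
  sum_nbij' (fun i => (i : ZMod v)) ZMod.val (by simp) (by simp [ZMod.val_lt])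
    (fun i hi => ZMod.val_natCast_of_lt (mem_range.1 hi)) (by simp) (by simp)

lemma card_filter_sub_eq (X : Finset (ZMod v)) (c : ZMod v) :
    #{p ∈ X ×ˢ X | p.1 - p.2 = c} = #{b ∈ X | b + c ∈ X} := by
  refine card_nbij' Prod.snd (fun b => (b + c, b)) ?_ ?_ ?_ ?_ <;> intro p <;>
    simp only [coe_filter, mem_product, Set.mem_ofPred_eq] <;> grind

lemma sdsCount_eq_card_filter_add (X Y : Finset (ZMod v)) (c : ZMod v) :
    sdsCount v X Y c = #{b ∈ X | b + c ∈ X} + #{b ∈ Y | b + c ∈ Y} := by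
  rw [sdsCount, card_filter_sub_eq, card_filter_sub_eq]

lemma paf_signSeq [NeZero v] (X : Finset (ZMod v)) (s : ZMod v) :
    paf v (signSeq X) s = v - 4 * #X + 4 * #{b ∈ X | b + s ∈ X} := by
  have hX : ∑ x : ZMod v, (if x ∈ X then 1 else 0 : ℤ) = #X := by simp
  have hXs : ∑ x : ZMod v, (if x + s ∈ X then 1 else 0 : ℤ) = #X :=
    (Equiv.sum_comp (Equiv.addRight s) fun x => if x ∈ X then (1 : ℤ) else 0).trans hX
  have hXX :
      ∑ x : ZMod v, (if x ∈ X ∧ x + s ∈ X then 1 else 0 : ℤ) = #{b ∈ X | b + s ∈ X} := by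
    rw [sum_boole]; congr 2; ext; simp
  have hprod (x : ZMod v) : signSeq X x * signSeq X (x + s) =
      1 - 2 * (if x ∈ X then 1 else 0) - 2 * (if x + s ∈ X then 1 else 0)
        + 4 * (if x ∈ X ∧ x + s ∈ X then 1 else 0) := by
    unfold signSeq; split_ifs <;> simp_all
  rw [paf, sum_range_natCast_eq_sum (fun x => signSeq X x * signSeq X (x + s))]
  simp only [hprod, sum_add_distrib, sum_sub_distrib, ← mul_sum, hX, hXs, hXX, sum_const,
    card_univ, ZMod.card, nsmul_eq_mul, mul_one]
  ring

theorem paf_add_paf_signSeq_eq_zero [NeZero v] {X Y : Finset (ZMod v)} {l : ℕ}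
    (hXY : ∀ c ≠ 0, sdsCount v X Y c = l) (hl : v + 2 * l = 2 * (#X + #Y)) {s : ZMod v}
    (hs : s ≠ 0) : paf v (signSeq X) s + paf v (signSeq Y) s = 0 := by
  have hcount := hXY s hs
  rw [sdsCount_eq_card_filter_add] at hcount
  rw [paf_signSeq, paf_signSeq]
  zify at hl hcount
  linarith

end SignSequence

section Multipliers

variable {v : ℕ} {X Y : Finset (ZMod v)}

lemma sdsCount_neg (c : ZMod v) : sdsCount v X Y (-c) = sdsCount v X Y c := by
  have key (X : Finset (ZMod v)) :
      #{p ∈ X ×ˢ X | p.1 - p.2 = -c} = #{p ∈ X ×ˢ X | p.1 - p.2 = c} := by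
    refine card_nbij' Prod.swap Prod.swap ?_ ?_ ?_ ?_ <;> intro p <;>
      simp only [coe_filter, mem_product, Set.mem_ofPred_eq, Prod.fst_swap, Prod.snd_swap] <;>
      grind
  rw [sdsCount, sdsCount, key, key]

lemma card_filter_add_mul_mem {u : ZMod v} (hu : IsUnit u) (hX : ∀ x, u * x ∈ X ↔ x ∈ X)
    (c : ZMod v) : #{b ∈ X | b + u * c ∈ X} = #{b ∈ X | b + c ∈ X} := by
  obtain ⟨w, rfl⟩ := hu
  have hX' (x : ZMod v) : ↑w⁻¹ * x ∈ X ↔ x ∈ X := by rw [← hX]; simp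
  refine card_nbij' (fun b => ↑w⁻¹ * b) (fun b => w * b) ?_ ?_ (by intro b _; simp)
    (by intro b _; simp)
  · intro b
    simp only [coe_filter, Set.mem_ofPred_eq, hX']
    rw [← hX (↑w⁻¹ * b + c)]
    simp [mul_add]
  · intro b
    simp only [coe_filter, Set.mem_ofPred_eq, hX, ← mul_add]
    exact id

lemma sdsCount_mul {u : ZMod v} (hu : IsUnit u) (hX : ∀ x, u * x ∈ X ↔ x ∈ X)
    (hY : ∀ x, u * x ∈ Y ↔ x ∈ Y) (c : ZMod v) :
    sdsCount v X Y (u * c) = sdsCount v X Y c := by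
  rw [sdsCount_eq_card_filter_add, sdsCount_eq_card_filter_add, card_filter_add_mul_mem hu hX,
    card_filter_add_mul_mem hu hY]

end Multipliers

section OrbitUnions

variable {M : Type*} [CommMonoid M] [DecidableEq M] {J H : Finset M}

lemma mem_mul_iff_exists_mul_mem (hinv : ∀ a ∈ H, ∃ b ∈ H, a * b = 1) {x : M} :
    x ∈ J * H ↔ ∃ h ∈ H, x * h ∈ J := by
  rw [mem_mul]
  constructor
  · rintro ⟨j, hj, h, hh, rfl⟩
    obtain ⟨h', hh', hhh'⟩ := hinv h hh
    exact ⟨h', hh', by rwa [mul_assoc, hhh', mul_one]⟩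
  · rintro ⟨h, hh, hxh⟩
    obtain ⟨h', hh', hhh'⟩ := hinv h hh
    exact ⟨x * h, hxh, h', hh', by rw [mul_assoc, hhh', mul_one]⟩

lemma mul_mem_mul_iff (hmul : ∀ a ∈ H, ∀ b ∈ H, a * b ∈ H)
    (hinv : ∀ a ∈ H, ∃ b ∈ H, a * b = 1) {u : M} (hu : u ∈ H) (x : M) :
    u * x ∈ J * H ↔ x ∈ J * H := by
  simp only [mem_mul_iff_exists_mul_mem hinv]
  constructor
  · rintro ⟨h, hh, hj⟩
    exact ⟨u * h, hmul u hu h hh, by rwa [mul_left_comm, ← mul_assoc]⟩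
  · rintro ⟨h, hh, hj⟩
    obtain ⟨u', hu', huu'⟩ := hinv u hu
    refine ⟨u' * h, hmul u' hu' h hh, ?_⟩
    rwa [mul_mul_mul_comm, huu', one_mul]

end OrbitUnions

namespace SDS202

def H : Finset (ZMod 202) := {1, 87, 95, 137, 185}

def J : Finset (ZMod 202) :=
  {2, 4, 9, 11, 12, 13, 18, 20, 22, 24, 25, 26, 38, 41, 50, 51, 53, 55, 67, 76}

def K : Finset (ZMod 202) :=
  {1, 3, 4, 6, 8, 9, 11, 12, 16, 17, 20, 25, 39, 41, 48, 52, 67, 76, 101}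

/-- One representative of each orbit of `±H` on the nonzero residues. -/
def orbitReps : Finset (ZMod 202) :=
  {1, 2, 3, 4, 5, 6, 8, 9, 10, 11, 13, 16, 18, 20, 26, 27, 29, 33, 39, 52, 101}

lemma H_mul_mem : ∀ a ∈ H, ∀ b ∈ H, a * b ∈ H := by decide +kernel

lemma H_exists_inv : ∀ a ∈ H, ∃ b ∈ H, a * b = 1 := by decide +kernel

lemma card_JH : #(J * H) = 100 := by decide +kernel

lemma card_KH : #(K * H) = 91 := by decide +kernel

lemma exists_mul_mem_orbitReps :
    ∀ s : ZMod 202, s ≠ 0 → ∃ h ∈ H, h * s ∈ orbitReps ∨ -(h * s) ∈ orbitReps := by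
  decide +kernel

lemma sdsCount_orbitReps : ∀ r ∈ orbitReps, sdsCount 202 (J * H) (K * H) r = 90 := by
  -- testing `x ∈ J * H` against `J` is far cheaper for the kernel than enumerating `J * H`
  simp only [sdsCount_eq_card_filter_add, mem_mul_iff_exists_mul_mem H_exists_inv]
  decide +kernel

lemma sdsCount_eq_ninety (s : ZMod 202) (hs : s ≠ 0) : sdsCount 202 (J * H) (K * H) s = 90 := by
  obtain ⟨h, hh, hr⟩ := exists_mul_mem_orbitReps s hs
  have hunit : IsUnit h := by
    obtain ⟨h', -, hhh'⟩ := H_exists_inv h hh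
    exact IsUnit.of_mul_eq_one h' hhh'
  rw [← sdsCount_mul hunit (mul_mem_mul_iff H_mul_mem H_exists_inv hh)
    (mul_mem_mul_iff H_mul_mem H_exists_inv hh)]
  rcases hr with hr | hr
  · exact sdsCount_orbitReps _ hr
  · rw [← sdsCount_neg]; exact sdsCount_orbitReps _ hr

end SDS202

theorem periodic_golay_pair_length_202 :
    ∃ A B : ZMod 202 → ℤ,
      (∀ i, A i = 1 ∨ A i = -1) ∧ (∀ i, B i = 1 ∨ B i = -1) ∧
      ∀ s : ZMod 202, s ≠ 0 → paf 202 A s + paf 202 B s = 0 :=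
  ⟨signSeq (SDS202.J * SDS202.H), signSeq (SDS202.K * SDS202.H), signSeq_eq_one_or_neg_one _,
    signSeq_eq_one_or_neg_one _, fun _ => paf_add_paf_signSeq_eq_zero SDS202.sdsCount_eq_ninety
      (by rw [SDS202.card_JH, SDS202.card_KH])⟩
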